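/- Along the steady shock polar parametrization of the detachment point, where w^d = (1/2)·(τ(τ²-1)h' - 2h)^{1/2}(( τ²-1)h' + 2h)^{1/2} / (τ(τ+1)h' + h) and M_∞² = 2h(2h + τ(τ+1)h')/(2h + (τ²-1)h') with h, h' evaluated at τ > 1, both w^d and M_∞² are strictly increasing functions of τ on (1, ∞). -/

import Mathlib

open Set

/-- Polytropic enthalpy: `h(τ) = (τ^(γ-1) - 1)/(γ-1)` for `γ > 1`, `log τ` for `γ = 1`. -/
noncomputable def enthalpy (γ τ : ℝ) : ℝ :=
  if γ = 1 then Real.log τ else (τ ^ (γ - 1) - 1) / (γ - 1)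

/-- Detachment-point parametrization of the deflection tangent:
`w^d(τ) = (1/2)(τ(τ²-1)h' - 2h)^{1/2}((τ²-1)h' + 2h)^{1/2}/(τ(τ+1)h' + h)`,
with `h` and `h' = τ^(γ-2)` evaluated at `τ`. -/
noncomputable def wD (γ τ : ℝ) : ℝ :=
  (1 / 2) * Real.sqrt (τ * (τ ^ 2 - 1) * τ ^ (γ - 2) - 2 * enthalpy γ τ) *
      Real.sqrt ((τ ^ 2 - 1) * τ ^ (γ - 2) + 2 * enthalpy γ τ) /
    (τ * (τ + 1) * τ ^ (γ - 2) + enthalpy γ τ)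

/-- Detachment-point parametrization of the squared upstream Mach number:
`M_∞²(τ) = 2h(2h + τ(τ+1)h')/(2h + (τ²-1)h')`. -/
noncomputable def MinfSqD (γ τ : ℝ) : ℝ :=
  2 * enthalpy γ τ * (2 * enthalpy γ τ + τ * (τ + 1) * τ ^ (γ - 2)) /
    (2 * enthalpy γ τ + (τ ^ 2 - 1) * τ ^ (γ - 2))

/-!
After squaring `w^d`, both `(2 w^d)²` and `M_∞²` are rational in `τ`, `h`, `h'`, and for an
arbitrary `h` their derivatives are `(τ+1)² h' f_d / (τ(τ+1)h' + h)³` and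
`2 h' f_d / (2h + (τ²-1)h')²`. For the polytropic `h` one has `τ h'' = (γ-2) h'` and
`τ h' = 1 + (γ-1) h`; eliminating `h''` and `γ` turns `τ f_d` into
`2(2τ-1)h² + (τ+1)h(3(τ-1)m - 2) + (τ+1)²(τ-1)m²` with `m = τ h' = τ^(γ-1) ≥ 1`,
which is positive because `0 < h ≤ (τ-1)m` (both sides vanish at `τ = 1`, and the
derivative of the right side is larger when `γ ≥ 1`).
-/

/-- The paper's `f_d(τ)` times `h'`, which clears its denominator; the arguments are the values
of `h`, `h'`, `h''` at `τ`. -/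
def fd (τ h h' h'' : ℝ) : ℝ :=
  2 * h ^ 2 * (3 * h' + (τ + 1) * h'') + (3 * τ - 5) * (τ + 1) * h * h' ^ 2
    + τ * (τ + 1) * (τ ^ 2 - 1) * h' ^ 3

theorem strictMonoOn_of_hasDerivAt_pos {D : Set ℝ} (hD : Convex ℝ D) {f f' : ℝ → ℝ}
    (hf : ∀ x ∈ D, HasDerivAt f (f' x) x) (hf' : ∀ x ∈ interior D, 0 < f' x) :
    StrictMonoOn f D :=
  strictMonoOn_of_deriv_pos hD (fun x hx => (hf x hx).continuousAt.continuousWithinAt)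
    fun x hx => (hf x (interior_subset hx)).deriv ▸ hf' x hx

section GeneralEnthalpy

variable {h h' : ℝ → ℝ} {h'' τ : ℝ}

theorem hasDerivAt_detachment_wSq (hh : HasDerivAt h (h' τ) τ) (hh' : HasDerivAt h' h'' τ)
    (hC : τ * (τ + 1) * h' τ + h τ ≠ 0) :
    HasDerivAt (fun x => (x * (x ^ 2 - 1) * h' x - 2 * h x) * ((x ^ 2 - 1) * h' x + 2 * h x)
        / (x * (x + 1) * h' x + h x) ^ 2)
      ((τ + 1) ^ 2 * fd τ (h τ) (h' τ) h'' / (τ * (τ + 1) * h' τ + h τ) ^ 3) τ := by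
  have hx := hasDerivAt_id' τ
  have hA := ((hx.mul ((hasDerivAt_pow 2 τ).sub_const 1)).mul hh').sub (hh.const_mul 2)
  have hB := (((hasDerivAt_pow 2 τ).sub_const 1).mul hh').add (hh.const_mul 2)
  have hC' := ((hx.mul (hx.add_const 1)).mul hh').add hh
  refine ((hA.mul hB).div (hC'.pow 2) (pow_ne_zero 2 hC)).congr_deriv ?_
  simp only [fd, Pi.mul_apply, Pi.add_apply, Pi.sub_apply, Pi.pow_apply, Nat.cast_ofNat,
    Nat.reduceSub, pow_one]
  field_simp
  ring

theorem hasDerivAt_detachment_machSq (hh : HasDerivAt h (h' τ) τ) (hh' : HasDerivAt h' h'' τ)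
    (hB : 2 * h τ + (τ ^ 2 - 1) * h' τ ≠ 0) :
    HasDerivAt (fun x => 2 * h x * (2 * h x + x * (x + 1) * h' x) / (2 * h x + (x ^ 2 - 1) * h' x))
      (2 * fd τ (h τ) (h' τ) h'' / (2 * h τ + (τ ^ 2 - 1) * h' τ) ^ 2) τ := by
  have hx := hasDerivAt_id' τ
  have hD := (hh.const_mul 2).add ((hx.mul (hx.add_const 1)).mul hh')
  have hB' := (hh.const_mul 2).add (((hasDerivAt_pow 2 τ).sub_const 1).mul hh')
  refine (((hh.const_mul 2).mul hD).div hB' hB).congr_deriv ?_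
  simp only [fd, Pi.mul_apply, Pi.add_apply, Nat.cast_ofNat, Nat.reduceSub, pow_one]
  field_simp
  ring

end GeneralEnthalpy

theorem enthalpy_one (γ : ℝ) : enthalpy γ 1 = 0 := by
  unfold enthalpy
  split_ifs <;> simp

theorem hasDerivAt_enthalpy (γ : ℝ) {x : ℝ} (hx : 0 < x) :
    HasDerivAt (enthalpy γ) (x ^ (γ - 2)) x := by
  rcases eq_or_ne γ 1 with rfl | hγ
  · have hlog : enthalpy 1 = Real.log := funext fun _ => if_pos rfl
    rw [hlog, show (1 : ℝ) - 2 = -1 by norm_num, Real.rpow_neg_one]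
    exact Real.hasDerivAt_log hx.ne'
  · have hpow : enthalpy γ = fun y => (y ^ (γ - 1) - 1) / (γ - 1) := funext fun _ => if_neg hγ
    rw [hpow]
    refine (((Real.hasDerivAt_rpow_const (Or.inl hx.ne')).sub_const 1).div_const _).congr_deriv ?_
    field_simp [sub_ne_zero.mpr hγ]
    ring_nf

theorem self_mul_rpow_sub_one {x : ℝ} (hx : x ≠ 0) (y : ℝ) : x * x ^ (y - 1) = x ^ y := by
  rw [Real.rpow_sub_one hx]
  field_simp

theorem hasDerivAt_rpow_sub_two (γ : ℝ) {x : ℝ} (hx : 0 < x) :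
    HasDerivAt (fun y => y ^ (γ - 2)) ((γ - 2) * x ^ (γ - 2 - 1)) x :=
  Real.hasDerivAt_rpow_const (Or.inl hx.ne')

theorem self_mul_rpow_sub_two (γ : ℝ) {x : ℝ} (hx : 0 < x) :
    x * x ^ (γ - 2) = 1 + (γ - 1) * enthalpy γ x := by
  rw [mul_comm, ← Real.rpow_add_one hx.ne', show γ - 2 + 1 = γ - 1 by ring]
  rcases eq_or_ne γ 1 with rfl | hγ
  · simp
  · simp only [enthalpy, if_neg hγ]
    field_simp [sub_ne_zero.mpr hγ]
    ring

theorem enthalpy_pos (γ : ℝ) {x : ℝ} (hx : 1 < x) : 0 < enthalpy γ x := by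
  have hmono : StrictMonoOn (enthalpy γ) (Ici 1) :=
    strictMonoOn_of_hasDerivAt_pos (convex_Ici 1)
      (fun y hy => hasDerivAt_enthalpy γ (zero_lt_one.trans_le hy))
      fun y hy => Real.rpow_pos_of_pos (zero_lt_one.trans (interior_Ici.subset hy)) _
  simpa [enthalpy_one] using hmono self_mem_Ici hx.le hx

theorem enthalpy_le_sub_one_mul (γ : ℝ) (hγ : 1 ≤ γ) {x : ℝ} (hx : 1 < x) :
    enthalpy γ x ≤ (x - 1) * (x * x ^ (γ - 2)) := by
  have hmono : StrictMonoOn (fun y => (y - 1) * (y * y ^ (γ - 2)) - enthalpy γ y) (Ici 1) := by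
    refine strictMonoOn_of_hasDerivAt_pos (f' := fun y => γ * (y - 1) * y ^ (γ - 2))
      (convex_Ici 1) (fun y hy => ?_) fun y hy => ?_
    · have hy0 : 0 < y := zero_lt_one.trans_le hy
      have hid := hasDerivAt_id' y
      refine (((hid.sub_const 1).mul (hid.mul (hasDerivAt_rpow_sub_two γ hy0))).sub
        (hasDerivAt_enthalpy γ hy0)).congr_deriv ?_
      simp only [Pi.mul_apply]
      linear_combination (γ - 2) * (y - 1) * self_mul_rpow_sub_one hy0.ne' (γ - 2)
    · rw [interior_Ici, mem_Ioi] at hy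
      have := Real.rpow_pos_of_pos (zero_lt_one.trans hy) (γ - 2)
      have := sub_pos.mpr hy
      positivity
  have := hmono self_mem_Ici hx.le hx
  simp only [sub_self, zero_mul, enthalpy_one] at this
  linarith

theorem fd_reduced_pos {t h m : ℝ} (ht : 1 < t) (hh : 0 < h) (hm : 1 ≤ m) (hhm : h ≤ (t - 1) * m) :
    0 < 2 * (2 * t - 1) * h ^ 2 + (t + 1) * h * (3 * (t - 1) * m - 2)
      + (t + 1) ^ 2 * (t - 1) * m ^ 2 := by
  nlinarith [mul_nonneg (sub_nonneg.2 hhm) hh.le, sub_nonneg.2 hhm,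
    mul_nonneg (mul_nonneg (sub_nonneg.2 ht.le) (zero_le_one.trans hm))
      (sub_nonneg.2 (by nlinarith : (2 : ℝ) ≤ (t + 1) * m)),
    sq_nonneg h, mul_pos hh hh]

theorem fd_enthalpy_pos {γ τ : ℝ} (hγ : 1 ≤ γ) (hτ : 1 < τ) :
    0 < fd τ (enthalpy γ τ) (τ ^ (γ - 2)) ((γ - 2) * τ ^ (γ - 2 - 1)) := by
  have hτ0 : 0 < τ := zero_lt_one.trans hτ
  have hp : 0 < τ ^ (γ - 2) := Real.rpow_pos_of_pos hτ0 _
  have hh := enthalpy_pos γ hτ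
  have hm := self_mul_rpow_sub_two γ hτ0
  have hreduced := fd_reduced_pos hτ hh (by nlinarith) (enthalpy_le_sub_one_mul γ hγ hτ)
  have hid : τ * fd τ (enthalpy γ τ) (τ ^ (γ - 2)) ((γ - 2) * τ ^ (γ - 2 - 1)) =
      τ ^ (γ - 2) * (2 * (2 * τ - 1) * enthalpy γ τ ^ 2
        + (τ + 1) * enthalpy γ τ * (3 * (τ - 1) * (τ * τ ^ (γ - 2)) - 2)
        + (τ + 1) ^ 2 * (τ - 1) * (τ * τ ^ (γ - 2)) ^ 2) := by
    unfold fd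
    linear_combination 2 * enthalpy γ τ ^ 2 * (τ + 1) * (γ - 2) * self_mul_rpow_sub_one hτ0.ne' (γ - 2)
      - 2 * (τ + 1) * enthalpy γ τ * τ ^ (γ - 2) * hm
  exact pos_of_mul_pos_right (hid ▸ mul_pos hp hreduced) hτ0.le

theorem detachment_factors_pos (γ : ℝ) {τ : ℝ} (hτ : 1 < τ) :
    0 < 2 * enthalpy γ τ + (τ ^ 2 - 1) * τ ^ (γ - 2) ∧
      0 < τ * (τ + 1) * τ ^ (γ - 2) + enthalpy γ τ := by
  have hτ0 : 0 < τ := zero_lt_one.trans hτ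
  have hp : 0 < τ ^ (γ - 2) := Real.rpow_pos_of_pos hτ0 _
  have hh := enthalpy_pos γ hτ
  have hτ2 : 0 < τ ^ 2 - 1 := by nlinarith
  constructor <;> positivity

theorem two_mul_enthalpy_le {γ τ : ℝ} (hγ : 1 ≤ γ) (hτ : 1 < τ) :
    2 * enthalpy γ τ ≤ τ * (τ ^ 2 - 1) * τ ^ (γ - 2) := by
  have hh := enthalpy_pos γ hτ
  nlinarith [enthalpy_le_sub_one_mul γ hγ hτ]

/-- `(2 w^d)²`. -/
noncomputable def wDSq (γ τ : ℝ) : ℝ :=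
  (τ * (τ ^ 2 - 1) * τ ^ (γ - 2) - 2 * enthalpy γ τ) *
      ((τ ^ 2 - 1) * τ ^ (γ - 2) + 2 * enthalpy γ τ) /
    (τ * (τ + 1) * τ ^ (γ - 2) + enthalpy γ τ) ^ 2

theorem wDSq_nonneg {γ τ : ℝ} (hγ : 1 ≤ γ) (hτ : 1 < τ) : 0 ≤ wDSq γ τ :=
  div_nonneg (mul_nonneg (sub_nonneg.mpr (two_mul_enthalpy_le hγ hτ))
    (by linarith [(detachment_factors_pos γ hτ).1])) (sq_nonneg _)

theorem wD_eq_sqrt_wDSq {γ τ : ℝ} (hγ : 1 ≤ γ) (hτ : 1 < τ) : wD γ τ = √(wDSq γ τ) / 2 := by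
  have hA := sub_nonneg.mpr (two_mul_enthalpy_le hγ hτ)
  obtain ⟨hB, hC⟩ := detachment_factors_pos γ hτ
  rw [wD, wDSq, Real.sqrt_div (mul_nonneg hA (by linarith)), Real.sqrt_sq hC.le,
    Real.sqrt_mul hA]
  ring

theorem strictMonoOn_wDSq {γ : ℝ} (hγ : 1 ≤ γ) : StrictMonoOn (wDSq γ) (Ioi 1) := by
  refine strictMonoOn_of_hasDerivAt_pos (convex_Ioi 1) (f' := fun τ =>
      (τ + 1) ^ 2 * fd τ (enthalpy γ τ) (τ ^ (γ - 2)) ((γ - 2) * τ ^ (γ - 2 - 1))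
        / (τ * (τ + 1) * τ ^ (γ - 2) + enthalpy γ τ) ^ 3) (fun τ hτ => ?_) fun τ hτ => ?_
  · have hτ0 : 0 < τ := zero_lt_one.trans hτ
    exact hasDerivAt_detachment_wSq (hasDerivAt_enthalpy γ hτ0) (hasDerivAt_rpow_sub_two γ hτ0)
      (detachment_factors_pos γ hτ).2.ne'
  · rw [interior_Ioi, mem_Ioi] at hτ
    exact div_pos (mul_pos (pow_pos (by linarith) 2) (fd_enthalpy_pos hγ hτ))
      (pow_pos (detachment_factors_pos γ hτ).2 3)

theorem strictMonoOn_wD {γ : ℝ} (hγ : 1 ≤ γ) : StrictMonoOn (wD γ) (Ioi 1) := by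
  intro x hx y hy hxy
  rw [wD_eq_sqrt_wDSq hγ hx, wD_eq_sqrt_wDSq hγ hy]
  have := wDSq_nonneg hγ hx
  gcongr
  exact strictMonoOn_wDSq hγ hx hy hxy

theorem strictMonoOn_MinfSqD {γ : ℝ} (hγ : 1 ≤ γ) : StrictMonoOn (MinfSqD γ) (Ioi 1) := by
  refine strictMonoOn_of_hasDerivAt_pos (convex_Ioi 1) (f' := fun τ =>
      2 * fd τ (enthalpy γ τ) (τ ^ (γ - 2)) ((γ - 2) * τ ^ (γ - 2 - 1))
        / (2 * enthalpy γ τ + (τ ^ 2 - 1) * τ ^ (γ - 2)) ^ 2) (fun τ hτ => ?_) fun τ hτ => ?_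
  · have hτ0 : 0 < τ := zero_lt_one.trans hτ
    exact hasDerivAt_detachment_machSq (hasDerivAt_enthalpy γ hτ0)
      (hasDerivAt_rpow_sub_two γ hτ0) (detachment_factors_pos γ hτ).1.ne'
  · rw [interior_Ioi] at hτ
    exact div_pos (mul_pos two_pos (fd_enthalpy_pos hγ hτ))
      (pow_pos (detachment_factors_pos γ hτ).1 2)

/-- Along the steady shock polar detachment-point parametrization, both `w^d` and
`M_∞²` are strictly increasing functions of `τ` on `(1, ∞)`. -/
theorem detachment_parametrization_strictMono (γ : ℝ) (hγ : 1 ≤ γ) :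
    StrictMonoOn (wD γ) (Set.Ioi 1) ∧ StrictMonoOn (MinfSqD γ) (Set.Ioi 1) :=
  ⟨strictMonoOn_wD hγ, strictMonoOn_MinfSqD hγ⟩
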